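/- With notation as in the previous statement, the largest integer k with t_{n−k+1} ≤ s₁, …, t_n ≤ s_k equals the maximum integer k₁ for which there exist indices 1 ≤ i₁ < ⋯ < i_{k₁} ≤ n and 1 ≤ l₁ < ⋯ < l_{k₁} ≤ m with t_{i_r} ≤ s_{l_r} for all r = 1,…,k₁. -/
import Mathlib


namespace Stmt10

lemma aux_le {k : ℕ} (g : Fin k → ℕ) (hg : StrictMono g) : ∀ r : Fin k, (r : ℕ) ≤ g r := by
  intro r
  obtain ⟨v, hv⟩ := r
  induction v with
  | zero => exact Nat.zero_le _
  | succ w ih =>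
      have hw : w < k := by omega
      have h1 : g ⟨w, hw⟩ < g ⟨w + 1, hv⟩ := hg (by simp [Fin.lt_def])
      have h2 := ih hw
      simp only [Fin.val_mk] at h2 ⊢
      omega

lemma aux_upper {k n : ℕ} (i : Fin k → Fin n) (hi : StrictMono i) (r : Fin k) :
    (i r : ℕ) ≤ n - k + (r : ℕ) := by
  have hk : 0 < k := r.pos
  have hn : 0 < n := (i r).pos
  set g : Fin k → ℕ := fun x => n - 1 - (i x.rev : ℕ) with hg
  have hgm : StrictMono g := by
    intro a b hab
    have h1 : i b.rev < i a.rev := hi (by simpa [Fin.rev_lt_rev] using hab)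
    have h2 : (i a.rev : ℕ) ≤ n - 1 := by have := (i a.rev).isLt; omega
    simp only [hg, Fin.lt_def] at h1 ⊢
    omega
  have hrr : r.rev.rev = r := Fin.rev_rev r
  have h3 : (r.rev : ℕ) ≤ n - 1 - (i r : ℕ) := by
    simpa only [hg, hrr] using aux_le g hgm r.rev
  have hrv : (r.rev : ℕ) = k - 1 - (r : ℕ) := by
    simp only [Fin.val_rev]; omega
  have hlt := r.isLt
  have hilt := (i r).isLt
  omega

/-- For strictly decreasing real sequences `t₁ > ⋯ > t_n` and `s₁ > ⋯ > s_m`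
with integer pairwise differences, the largest `k` with
`t_{n−k+1} ≤ s₁, …, t_n ≤ s_k` equals the maximum `k₁` for which there exist
`i₁ < ⋯ < i_{k₁}` and `l₁ < ⋯ < l_{k₁}` with `t_{i_r} ≤ s_{l_r}` for all `r`. -/
theorem minimax (n m : ℕ) (t : Fin n → ℝ) (s : Fin m → ℝ)
    (ht : StrictAnti t) (hs : StrictAnti s)
    (htz : ∀ i j, ∃ z : ℤ, t i - t j = (z : ℝ))
    (hsz : ∀ i j, ∃ z : ℤ, s i - s j = (z : ℝ)) :
    sSup {k : ℕ | ∃ _h1 : k ≤ n, ∃ _h2 : k ≤ m, ∀ r : Fin k,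
        t ⟨n - k + (r : ℕ), by have := r.isLt; omega⟩ ≤
          s ⟨(r : ℕ), by have := r.isLt; omega⟩} =
    sSup {k : ℕ | ∃ (i : Fin k → Fin n) (l : Fin k → Fin m),
        StrictMono i ∧ StrictMono l ∧ ∀ r, t (i r) ≤ s (l r)} := by
  congr 1
  ext k
  constructor
  · rintro ⟨h1, h2, h⟩
    refine ⟨fun r => ⟨n - k + (r : ℕ), by have := r.isLt; omega⟩,
      fun r => ⟨(r : ℕ), by have := r.isLt; omega⟩, ?_, ?_, h⟩
    · intro a b hab
      simp only [Fin.lt_def] at hab ⊢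
      have := b.isLt
      omega
    · intro a b hab
      simp only [Fin.lt_def, Fin.val_mk]
      exact hab
  · rintro ⟨i, l, hi, hl, h⟩
    have h1 : k ≤ n := by
      by_contra hc
      push_neg at hc
      have ha := aux_le (fun x => (i x : ℕ)) (fun a b hab => hi hab) ⟨n, hc⟩
      have hb := (i ⟨n, hc⟩).isLt
      simp only [Fin.val_mk] at ha
      omega
    have h2 : k ≤ m := by
      by_contra hc
      push_neg at hc
      have ha := aux_le (fun x => (l x : ℕ)) (fun a b hab => hl hab) ⟨m, hc⟩
      have hb := (l ⟨m, hc⟩).isLt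
      simp only [Fin.val_mk] at ha
      omega
    refine ⟨h1, h2, fun r => ?_⟩
    have hti : t ⟨n - k + (r : ℕ), by have := r.isLt; omega⟩ ≤ t (i r) := by
      apply ht.antitone
      have := aux_upper i hi r
      simp [Fin.le_def, this]
    have hsl : s (l r) ≤ s ⟨(r : ℕ), by have := r.isLt; omega⟩ := by
      apply hs.antitone
      have := aux_le (fun x => (l x : ℕ)) (fun a b hab => hl hab) r
      simpa [Fin.le_def] using this
    exact le_trans hti (le_trans (h r) hsl)

end Stmt10
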